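/- Let n ≥ 3 be odd and let X be a subgroup of the weight lattice Λ of SL(n+1). Then the following are equivalent: (i) X has full rank, X contains σ_1, …, σ_{n−1}, and the family {α_1^∨|_X, α_3^∨|_X, …, α_n^∨|_X} is part of a ℤ-basis of X^*; (ii) there exist e, r ∈ ℕ with e | (n+1)/2 and 0 ≤ r ≤ e−1 such that X = ⟨σ_2, σ_3, …, σ_{n−1}, e·ω_{n−1}, r·ω_{n−1} + ω_n⟩_ℤ. -/

import Mathlib

/-- The fundamental weights `ω_1, …, ω_n` of `SL(n+1)` in the weight lattice
`Λ = ℤⁿ`: `ω_j` is the `j`-th standard basis vector for `1 ≤ j ≤ n`, and by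
convention `ω_0 = ω_{n+1} = 0`. -/
def w (n : ℕ) (j : ℕ) : Fin n → ℤ := fun i => if (i : ℕ) + 1 = j then 1 else 0

/-- The simple roots of `SL(n+1)`: `α_i = 2ω_i − ω_{i−1} − ω_{i+1}` for `1 ≤ i ≤ n`. -/
def sroot (n : ℕ) (i : ℕ) : Fin n → ℤ := 2 • w n i - w n (i - 1) - w n (i + 1)

/-- `σ_i = α_i + α_{i+1}` for `1 ≤ i ≤ n−1`. -/
def sig (n : ℕ) (i : ℕ) : Fin n → ℤ := sroot n i + sroot n (i + 1)

/-- `ℤS⁺`, the subgroup of `Λ` generated by `σ_1, …, σ_{n−1}`. -/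
def ZSplus (n : ℕ) : Submodule ℤ (Fin n → ℤ) :=
  Submodule.span ℤ (sig n '' Set.Icc 1 (n - 1))

/-- A family of elements of a `ℤ`-module is *part of a basis* if it can be extended
to (i.e. realized injectively inside) a `ℤ`-basis. -/
def IsPartOfBasis {M : Type} [AddCommGroup M] [Module ℤ M] {ι : Type} (v : ι → M) : Prop :=
  ∃ (κ : Type) (b : Module.Basis κ ℤ M) (f : ι → κ), Function.Injective f ∧ ∀ i, b (f i) = v i

/-- The family of restrictions to `X` of the coroots with odd index
`α_1^∨, α_3^∨, …`, where `α_i^∨` is the `i`-th coordinate functional on `Λ = ℤⁿ`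
(i.e. `⟨α_i^∨, ω_j⟩ = δ_{ij}`), viewed as elements of `X^* = Hom_ℤ(X, ℤ)`.
The odd indices `1, 3, …` in `{1, …, n}` are enumerated by `j ↦ 2j+1`. -/
def oddCoroots (n : ℕ) (X : Submodule ℤ (Fin n → ℤ)) :
    Fin ((n + 1) / 2) → (X →ₗ[ℤ] ℤ) := fun j =>
  (LinearMap.proj (R := ℤ) (φ := fun _ : Fin n => ℤ)
    ⟨2 * (j : ℕ), by have := j.isLt; omega⟩).domRestrict X

/-!
Modulo `D = ⟨σ_2, …, σ_{n-1}⟩` the weight lattice becomes `ℤ²`, with `ω_n ↦ (1, 0)`,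
`ω_{n-1} ↦ (0, 1)` and `σ_1 ↦ (0, (n+1)/2)`, so a subgroup `X ⊇ D` is the preimage of its image
`L ⊆ ℤ²`. The odd coroots are part of a basis of `X^*` exactly when they map `X` onto
`ℤ^{(n+1)/2}`; their sum is the first coordinate on `ℤ²`, so this makes the first projection of `L`
surjective, and conversely it holds as soon as `L` contains some `(1, r)`, because `ω_{n-1}` has
even index. A subgroup of `ℤ²` containing `(0, (n+1)/2)` and surjecting onto the first factor has
Hermite normal form `⟨(0, e), (1, r)⟩` with `e ∣ (n+1)/2` and `0 ≤ r < e`; its preimage is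
generated by `D`, `e ω_{n-1}` and `r ω_{n-1} + ω_n`, and contains `e Λ`, hence has full rank.
-/

lemma Submodule.span_union_eq_comap_span_image {R M N : Type*} [Ring R] [AddCommGroup M]
    [AddCommGroup N] [Module R M] [Module R N] (f : M →ₗ[R] N) {s : Set M}
    (hs : Submodule.span R s = LinearMap.ker f) (t : Set M) :
    Submodule.span R (s ∪ t) = (Submodule.span R (f '' t)).comap f := by
  rw [Submodule.span_union, hs, ← Submodule.map_span, Submodule.comap_map_eq, sup_comm]

lemma Submodule.finrank_eq_of_smul_mem {R M : Type*} [CommRing R] [IsDomain R] [IsNoetherianRing R]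
    [AddCommGroup M] [Module R M] [Module.Finite R M] [Module.Free R M] (X : Submodule R M) {c : R}
    (hc : c ≠ 0)
    (hX : ∀ x, c • x ∈ X) : Module.finrank R X = Module.finrank R M := by
  have : IsNoetherian R M := isNoetherian_of_isNoetherianRing_of_finite R M
  have : Module.Finite R X := Module.IsNoetherian.finite R X
  refine le_antisymm (Submodule.finrank_le X) ?_
  have hinj : Function.Injective (LinearMap.lsmul R M c) := fun x y h => smul_right_injective M hc h
  calc Module.finrank R M = Module.finrank R (LinearMap.range (LinearMap.lsmul R M c)) :=
        (LinearMap.finrank_range_of_inj hinj).symm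
    _ ≤ Module.finrank R X := Submodule.finrank_mono (by rintro _ ⟨x, rfl⟩; exact hX x)

lemma LinearMap.exists_basis_repr_inr_eq {R M ι : Type*} [CommRing R] [IsDomain R]
    [IsPrincipalIdealRing R] [AddCommGroup M] [Module R M] [Module.Finite R M] [Module.Free R M]
    [Finite ι] (F : M →ₗ[R] ι → R) (hF : Function.Surjective F) :
    ∃ b : Module.Basis (Module.Free.ChooseBasisIndex R (LinearMap.ker F) ⊕ ι) R M,
      ∀ i x, b.repr x (Sum.inr i) = F x i := by
  set s := F.splittingOfFunOnFintypeSurjective hF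
  have hFs : ∀ u, F (s u) = u := LinearMap.congr_fun (F.splittingOfFunOnFintypeSurjective_splits hF)
  set K := LinearMap.ker F
  have : IsNoetherian R M := isNoetherian_of_isNoetherianRing_of_finite R M
  have : Module.Finite R K := Module.IsNoetherian.finite R K
  let p : M →ₗ[R] K := (LinearMap.id - s ∘ₗ F).codRestrict K fun x => by simp [K, hFs]
  let E : M ≃ₗ[R] K × (ι → R) := LinearEquiv.ofLinearMap (f := p.prod F) (g := K.subtype.coprod s)
    (by ext <;> simp [p, hFs, LinearMap.mem_ker.mp (Subtype.prop _)])
    (by ext; simp [p])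
  refine ⟨((Module.Free.chooseBasis R K).prod (Pi.basisFun R ι)).map E.symm, fun i x => ?_⟩
  simp [E]

lemma isPartOfBasis_iff_surjective_pi {M ι : Type} [AddCommGroup M] [Module ℤ M]
    [Module.Finite ℤ M] [Module.Free ℤ M] [Finite ι] (ν : ι → Module.Dual ℤ M) :
    IsPartOfBasis ν ↔ Function.Surjective (LinearMap.pi ν) := by
  classical
  have := Fintype.ofFinite ι
  constructor
  · rintro ⟨κ, b, f, hf, hb⟩ v
    refine ⟨∑ j, v j • (Module.evalEquiv ℤ M).symm (b.coord (f j)), funext fun i => ?_⟩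
    simp [← hb i, Finsupp.single_apply, hf.eq_iff]
  · intro hν
    obtain ⟨b, hb⟩ := (LinearMap.pi ν).exists_basis_repr_inr_eq hν
    refine ⟨_, b.dualBasis, Sum.inr, Sum.inr_injective, fun i => ?_⟩
    ext x
    rw [Module.Basis.dualBasis_apply, hb, LinearMap.pi_apply]

def hermiteLattice (e r : ℤ) : Submodule ℤ (ℤ × ℤ) := Submodule.span ℤ {(0, e), (1, r)}

lemma mem_hermiteLattice_iff {e r : ℤ} {p : ℤ × ℤ} :
    p ∈ hermiteLattice e r ↔ e ∣ p.2 - p.1 * r := by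
  constructor
  · rintro hp
    obtain ⟨a, b, rfl⟩ := Submodule.mem_span_pair.mp hp
    exact ⟨a, by simp; ring⟩
  · rintro ⟨c, hc⟩
    refine Submodule.mem_span_pair.mpr ⟨c, p.1, ?_⟩
    ext
    · simp
    · simp only [Prod.snd_add, Prod.smul_snd, smul_eq_mul]
      linarith

lemma smul_mem_hermiteLattice (e r : ℤ) (p : ℤ × ℤ) : e • p ∈ hermiteLattice e r := by
  rw [mem_hermiteLattice_iff, Prod.smul_fst, Prod.smul_snd, smul_eq_mul, smul_eq_mul, mul_assoc,
    ← mul_sub]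
  exact dvd_mul_right _ _

lemma exists_eq_hermiteLattice {L : Submodule ℤ (ℤ × ℤ)} {m : ℕ} (hm : 0 < m)
    (hmL : (0, (m : ℤ)) ∈ L) {b : ℤ} (hbL : (1, b) ∈ L) :
    ∃ e r : ℕ, e ∣ m ∧ r < e ∧ L = hermiteLattice e r := by
  obtain ⟨g, hg⟩ := (IsPrincipalIdealRing.principal (L.comap (LinearMap.inr ℤ ℤ ℤ))).principal
  set e := g.natAbs
  have hL0 : ∀ t : ℤ, (0, t) ∈ L ↔ (e : ℤ) ∣ t := fun t => by
    rw [Int.natAbs_dvd, ← Ideal.mem_span_singleton, Ideal.span, ← hg]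
    rfl
  have he : e ∣ m := Int.natCast_dvd_natCast.mp ((hL0 _).mp hmL)
  have he0 : (0 : ℤ) < e := by exact_mod_cast Nat.pos_of_dvd_of_pos he hm
  set r := b % e
  have hr : ((r.toNat : ℕ) : ℤ) = r := Int.toNat_of_nonneg (Int.emod_nonneg _ he0.ne')
  have h1r : (1, r) ∈ L := by
    have : ((1 : ℤ), r) = (1, b) - (b / e) • ((0 : ℤ), (e : ℤ)) := by
      ext <;> simp [r, Int.emod_def, mul_comm]
    rw [this]
    exact L.sub_mem hbL (L.smul_mem _ ((hL0 _).mpr dvd_rfl))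
  refine ⟨e, r.toNat, he, by rw [← Int.ofNat_lt, hr]; exact Int.emod_lt_of_pos b he0, ?_⟩
  rw [hr]
  refine le_antisymm (fun p hp => mem_hermiteLattice_iff.mpr ((hL0 _).mp ?_)) ?_
  · have : ((0 : ℤ), p.2 - p.1 * r) = p - p.1 • (1, r) := by ext <;> simp
    rw [this]
    exact L.sub_mem hp (L.smul_mem _ h1r)
  · rw [hermiteLattice, Submodule.span_le, Set.insert_subset_iff, Set.singleton_subset_iff]
    exact ⟨(hL0 _).mpr dvd_rfl, h1r⟩

section

variable {n : ℕ}

lemma w_succ (i : Fin n) : w n (i + 1) = Pi.single i 1 := by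
  funext k
  simp only [w, Pi.single_apply, Nat.add_right_cancel_iff, Fin.val_inj]

lemma w_eq_zero {j : ℕ} (h : j = 0 ∨ n < j) : w n j = 0 := by
  funext i
  simp only [w, Pi.zero_apply, ite_eq_right_iff]
  omega

lemma sig_eq {i : ℕ} (hi : 1 ≤ i) :
    sig n i = w n i + w n (i + 1) - w n (i - 1) - w n (i + 2) := by
  simp only [sig, sroot, show i + 1 - 1 = i by omega]
  abel

/-- Coordinates on `Λ / ⟨σ_2, …, σ_{n-1}⟩ ≅ ℤ²` in the basis formed by the images of `ω_n` and
`ω_{n-1}`: `ω_j ↦ (j mod 2, (n + 1 - j) / 2)`. The coordinate `i : Fin n` of `Λ` is that of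
`ω_{i+1}`. -/
def quotCoord (n : ℕ) : (Fin n → ℤ) →ₗ[ℤ] ℤ × ℤ :=
  Fintype.linearCombination ℤ fun i : Fin n =>
    (((i : ℤ) + 1) % 2, ((n : ℤ) - i) / 2)

lemma quotCoord_w (j : ℕ) : quotCoord n (w n j) =
    if 1 ≤ j ∧ j ≤ n then ((j : ℤ) % 2, ((n : ℤ) + 1 - j) / 2) else 0 := by
  by_cases hj : 1 ≤ j ∧ j ≤ n
  · rw [if_pos hj]
    obtain ⟨i, rfl⟩ : ∃ i : Fin n, j = i + 1 := ⟨⟨j - 1, by omega⟩, by simp only; omega⟩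
    rw [w_succ, quotCoord, Fintype.linearCombination_apply_single, one_smul]
    push_cast
    congr 2
    ring
  · rw [if_neg hj, w_eq_zero (by omega), map_zero]

lemma quotCoord_sig (hno : Odd n) {i : ℕ} (h2 : 2 ≤ i) (hi : i ≤ n - 1) :
    quotCoord n (sig n i) = 0 := by
  have := Nat.odd_iff.mp hno
  rw [sig_eq (by omega)]
  simp only [map_add, map_sub, quotCoord_w]
  split_ifs <;> simp only [Prod.ext_iff, Prod.fst_add, Prod.snd_add, Prod.fst_sub, Prod.snd_sub,
    Prod.fst_zero, Prod.snd_zero] <;> omega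

lemma quotCoord_sig_one (hn : 3 ≤ n) (hno : Odd n) :
    quotCoord n (sig n 1) = (0, (((n + 1) / 2 : ℕ) : ℤ)) := by
  have := Nat.odd_iff.mp hno
  rw [sig_eq le_rfl]
  simp only [map_add, map_sub, quotCoord_w]
  split_ifs <;> simp only [Prod.ext_iff, Prod.fst_add, Prod.snd_add, Prod.fst_sub, Prod.snd_sub,
    Prod.fst_zero, Prod.snd_zero] <;> omega

lemma quotCoord_w_pred (hn : 3 ≤ n) (hno : Odd n) : quotCoord n (w n (n - 1)) = (0, 1) := by
  have := Nat.odd_iff.mp hno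
  rw [quotCoord_w, if_pos (show 1 ≤ n - 1 ∧ n - 1 ≤ n by omega)]
  simp only [Prod.mk.injEq]
  omega

lemma quotCoord_w_self (hno : Odd n) : quotCoord n (w n n) = (1, 0) := by
  have := Nat.odd_iff.mp hno
  rw [quotCoord_w, if_pos ⟨hno.pos, le_rfl⟩]
  simp only [Prod.mk.injEq]
  omega

lemma span_sig_sup_span_w_eq_top :
    Submodule.span ℤ (sig n '' Set.Icc 2 (n - 1)) ⊔ Submodule.span ℤ {w n (n - 1), w n n} = ⊤ := by
  set S := Submodule.span ℤ (sig n '' Set.Icc 2 (n - 1)) ⊔ Submodule.span ℤ {w n (n - 1), w n n}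
  have hw : ∀ j, w n j ∈ S := by
    intro j
    induction h : n - j using Nat.strong_induction_on generalizing j with
    | _ k ih =>
      by_cases hj : j = 0 ∨ n < j
      · rw [w_eq_zero hj]
        exact S.zero_mem
      by_cases hj' : n - 1 ≤ j
      · refine Submodule.mem_sup_right (Submodule.subset_span ?_)
        obtain rfl | rfl : j = n - 1 ∨ j = n := by omega
        exacts [Set.mem_insert _ _, Set.mem_insert_of_mem _ rfl]
      have hσ : sig n (j + 1) ∈ S :=
        Submodule.mem_sup_left (Submodule.subset_span ⟨j + 1, ⟨by omega, by omega⟩, rfl⟩)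
      have hωj : w n j = w n (j + 1) + w n (j + 2) - w n (j + 3) - sig n (j + 1) := by
        rw [sig_eq (by omega), show j + 1 - 1 = j by omega]
        abel
      rw [hωj]
      exact S.sub_mem (S.sub_mem (S.add_mem (ih _ (by omega) _ rfl) (ih _ (by omega) _ rfl))
        (ih _ (by omega) _ rfl)) hσ
  rw [eq_top_iff, ← (Pi.basisFun ℤ (Fin n)).span_eq, Submodule.span_le]
  rintro _ ⟨i, rfl⟩
  rw [Pi.basisFun_apply, ← w_succ]
  exact hw _

lemma ker_quotCoord (hn : 3 ≤ n) (hno : Odd n) :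
    LinearMap.ker (quotCoord n) = Submodule.span ℤ (sig n '' Set.Icc 2 (n - 1)) := by
  have hle : Submodule.span ℤ (sig n '' Set.Icc 2 (n - 1)) ≤ LinearMap.ker (quotCoord n) := by
    rw [Submodule.span_le]
    rintro _ ⟨i, ⟨hi2, hi⟩, rfl⟩
    exact quotCoord_sig hno hi2 hi
  refine le_antisymm (fun x hx => ?_) hle
  obtain ⟨d, hd, y, hy, rfl⟩ :=
    Submodule.mem_sup.mp (span_sig_sup_span_w_eq_top ▸ Submodule.mem_top (x := x))
  obtain ⟨a, b, rfl⟩ := Submodule.mem_span_pair.mp hy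
  have hab : quotCoord n (d + (a • w n (n - 1) + b • w n n)) = (b, a) := by
    rw [map_add, map_add, map_smul, map_smul, LinearMap.mem_ker.mp (hle hd),
      quotCoord_w_pred hn hno, quotCoord_w_self hno]
    simp
  rw [LinearMap.mem_ker, hab, Prod.mk_eq_zero] at hx
  simpa [hx.1, hx.2] using hd

def oddCoords (n : ℕ) : (Fin n → ℤ) →ₗ[ℤ] Fin ((n + 1) / 2) → ℤ :=
  LinearMap.pi fun j => LinearMap.proj ⟨2 * (j : ℕ), by omega⟩

lemma isPartOfBasis_oddCoroots_iff (X : Submodule ℤ (Fin n → ℤ)) :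
    IsPartOfBasis (oddCoroots n X) ↔ X.map (oddCoords n) = ⊤ := by
  rw [isPartOfBasis_iff_surjective_pi, ← LinearMap.range_eq_top, ← LinearMap.range_domRestrict]
  rfl

lemma quotCoord_fst (x : Fin n → ℤ) : (quotCoord n x).1 = ∑ t, oddCoords n x t := by
  have : LinearMap.fst ℤ ℤ ℤ ∘ₗ quotCoord n = (∑ t, LinearMap.proj t) ∘ₗ oddCoords n := by
    refine LinearMap.pi_ext fun i a => ?_
    simp only [quotCoord, oddCoords, LinearMap.coe_comp, LinearMap.coe_fst, Function.comp_apply,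
      Fintype.linearCombination_apply_single, Prod.smul_mk, Int.zsmul_eq_mul, LinearMap.coe_sum,
      LinearMap.coe_proj, Finset.sum_apply, Function.eval, LinearMap.pi_apply, Pi.single_apply]
    obtain ⟨k, hk | hk⟩ := Nat.even_or_odd' i
    · have hc : ∀ c : Fin ((n + 1) / 2), (⟨2 * c, by omega⟩ : Fin n) = i ↔ c = ⟨k, by omega⟩ := by
        intro c
        simp only [Fin.ext_iff]
        omega
      simp only [hc, Finset.sum_ite_eq', Finset.mem_univ, if_true, hk]
      push_cast
      rw [show (2 * (k : ℤ) + 1) % 2 = 1 by omega, mul_one]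
    · rw [Finset.sum_eq_zero fun c _ => if_neg fun hc => by simp only [Fin.ext_iff] at hc; omega,
        hk]
      push_cast
      rw [show (2 * (k : ℤ) + 1 + 1) % 2 = 0 by omega, mul_zero]
  simpa using LinearMap.congr_fun this x

lemma oddCoords_w_apply (j : ℕ) (t : Fin ((n + 1) / 2)) :
    oddCoords n (w n j) t = if 2 * (t : ℕ) + 1 = j then 1 else 0 := rfl

lemma oddCoords_w_odd (t : Fin ((n + 1) / 2)) : oddCoords n (w n (2 * t + 1)) = Pi.single t 1 := by
  funext s
  simp only [oddCoords_w_apply, Pi.single_apply, Fin.ext_iff]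
  congr 1
  exact propext (by omega)

lemma oddCoords_w_pred (hno : Odd n) : oddCoords n (w n (n - 1)) = 0 := by
  have := Nat.odd_iff.mp hno
  funext s
  simp only [oddCoords_w_apply, Pi.zero_apply, ite_eq_right_iff]
  omega

lemma map_oddCoords_comap_quotCoord_eq_top (hn : 3 ≤ n) (hno : Odd n) {L : Submodule ℤ (ℤ × ℤ)}
    {r : ℤ} (hr : (1, r) ∈ L) : (L.comap (quotCoord n)).map (oddCoords n) = ⊤ := by
  rw [eq_top_iff, ← (Pi.basisFun ℤ _).span_eq, Submodule.span_le]
  rintro _ ⟨t, rfl⟩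
  -- `ω_{2t+1}` maps to `(1, s)` for some `s`; correct it by a multiple of `ω_{n-1}`, which
  -- `oddCoords` kills
  set c := r - (quotCoord n (w n (2 * t + 1))).2
  refine ⟨w n (2 * t + 1) + c • w n (n - 1), ?_, ?_⟩
  · have hodd : quotCoord n (w n (2 * t + 1)) = (1, (quotCoord n (w n (2 * t + 1))).2) := by
      rw [quotCoord_w, if_pos (by omega)]
      ext
      · simp only
        omega
      · rfl
    rw [SetLike.mem_coe, Submodule.mem_comap, map_add, map_smul, quotCoord_w_pred hn hno, hodd]
    convert hr using 1
    ext <;> simp [c]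
  · rw [map_add, map_smul, oddCoords_w_pred hno, smul_zero, add_zero, oddCoords_w_odd,
      Pi.basisFun_apply]

lemma exists_mem_map_quotCoord_fst_eq_one (hno : Odd n) {X : Submodule ℤ (Fin n → ℤ)}
    (hX : X.map (oddCoords n) = ⊤) : ∃ b, (1, b) ∈ X.map (quotCoord n) := by
  obtain ⟨x, hx, hxω⟩ : oddCoords n (w n n) ∈ X.map (oddCoords n) := hX ▸ Submodule.mem_top
  refine ⟨(quotCoord n x).2, x, hx, Prod.ext ?_ rfl⟩
  rw [quotCoord_fst, hxω, ← quotCoord_fst, quotCoord_w_self hno]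

lemma span_sig_union_eq_comap_hermiteLattice (hn : 3 ≤ n) (hno : Odd n) (e r : ℤ) :
    Submodule.span ℤ (sig n '' Set.Icc 2 (n - 1) ∪ {e • w n (n - 1), r • w n (n - 1) + w n n}) =
      (hermiteLattice e r).comap (quotCoord n) := by
  rw [Submodule.span_union_eq_comap_span_image _ (ker_quotCoord hn hno).symm, Set.image_pair,
    map_smul, map_add, map_smul, quotCoord_w_pred hn hno, quotCoord_w_self hno, hermiteLattice]
  congr 3 <;> ext <;> simp

end

/-- For `n ≥ 3` odd and a subgroup `X` of the weight lattice `Λ` of `SL(n+1)`,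
the following are equivalent: (i) `X` has full rank, contains `σ_1, …, σ_{n−1}`,
and `{α_1^∨|_X, α_3^∨|_X, …, α_n^∨|_X}` is part of a `ℤ`-basis of `X^*`;
(ii) `X = ⟨σ_2, …, σ_{n−1}, e·ω_{n−1}, r·ω_{n−1} + ω_n⟩_ℤ` for some `e, r ∈ ℕ` with
`e ∣ (n+1)/2` and `0 ≤ r ≤ e−1`. -/
theorem stmt15 (n : ℕ) (hn : 3 ≤ n) (hno : Odd n) (X : Submodule ℤ (Fin n → ℤ)) :
    (Module.finrank ℤ X = n ∧ (∀ i ∈ Set.Icc 1 (n - 1), sig n i ∈ X) ∧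
        IsPartOfBasis (oddCoroots n X)) ↔
      ∃ e r : ℕ, e ∣ (n + 1) / 2 ∧ r ≤ e - 1 ∧
        X = Submodule.span ℤ (sig n '' Set.Icc 2 (n - 1) ∪
          {(e : ℤ) • w n (n - 1), (r : ℤ) • w n (n - 1) + w n n}) := by
  have hm : 0 < (n + 1) / 2 := by omega
  constructor
  · rintro ⟨-, hσ, hX⟩
    have hD : LinearMap.ker (quotCoord n) ≤ X := by
      rw [ker_quotCoord hn hno, Submodule.span_le]
      rintro _ ⟨i, ⟨hi2, hi⟩, rfl⟩
      exact hσ i ⟨by omega, hi⟩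
    obtain ⟨b, hb⟩ :=
      exists_mem_map_quotCoord_fst_eq_one hno ((isPartOfBasis_oddCoroots_iff X).mp hX)
    have hσ₁ : (0, (((n + 1) / 2 : ℕ) : ℤ)) ∈ X.map (quotCoord n) :=
      ⟨sig n 1, hσ 1 ⟨le_rfl, by omega⟩, quotCoord_sig_one hn hno⟩
    obtain ⟨e, r, he, hr, hL⟩ := exists_eq_hermiteLattice hm hσ₁ hb
    refine ⟨e, r, he, by omega, ?_⟩
    rw [span_sig_union_eq_comap_hermiteLattice hn hno, ← hL, Submodule.comap_map_eq_self hD]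
  · rintro ⟨e, r, he, -, hX⟩
    rw [span_sig_union_eq_comap_hermiteLattice hn hno] at hX
    subst hX
    have he0 : (e : ℤ) ≠ 0 := by exact_mod_cast (Nat.pos_of_dvd_of_pos he hm).ne'
    refine ⟨?_, fun i ⟨hi1, hi⟩ => ?_, ?_⟩
    · refine (Submodule.finrank_eq_of_smul_mem _ he0 fun x => ?_).trans (Module.finrank_fin_fun ℤ)
      rw [Submodule.mem_comap, map_smul]
      exact smul_mem_hermiteLattice _ _ _
    · rw [Submodule.mem_comap, mem_hermiteLattice_iff]
      obtain rfl | hi2 := hi1.eq_or_lt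
      · simpa [quotCoord_sig_one hn hno] using Int.natCast_dvd_natCast.mpr he
      · simp [quotCoord_sig hno hi2 hi]
    · rw [isPartOfBasis_oddCoroots_iff]
      exact map_oddCoords_comap_quotCoord_eq_top hn hno (r := r)
        (mem_hermiteLattice_iff.mpr (by simp))
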